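/- arXiv:2103.01067 — 3 statements merged into one kernel-verified Lean document; each statement's English description precedes it below -/
import Mathlib

section
/- Every ascending chain S₁ ≤ S₂ ≤ S₃ ≤ ⋯ of infinite virtually cyclic subgroups of a group G whose union is also virtually cyclic eventually stabilizes: there exists N such that S_N = S_i for all i ≥ N. -/
/-!
Let `U` be the union of the chain. The subgroup `S 0` is infinite, so it has finite index in the
virtually cyclic group `U`: it meets a finite-index cyclic subgroup `C` of `U` nontrivially, and a
nontrivial subgroup of a cyclic group has finite index. Hence the indices `[U : S i]` form a
non-increasing sequence of natural numbers, which strictly decreases whenever the chain does.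
-/

/-- A group is virtually cyclic if it has a cyclic subgroup of finite index. -/
def IsVirtuallyCyclic (G : Type*) [Group G] : Prop :=
  ∃ H : Subgroup G, IsCyclic H ∧ H.FiniteIndex

namespace Subgroup

variable {G : Type*} [Group G]

theorem finiteIndex_of_ne_bot_of_isCyclic [IsCyclic G] {K : Subgroup G} (hK : K ≠ ⊥) :
    K.FiniteIndex := by
  obtain ⟨g, hg⟩ := IsCyclic.exists_generator (α := G)
  obtain ⟨x, hxK, hx1⟩ := (bot_or_exists_ne_one K).resolve_left hK
  obtain ⟨n, rfl⟩ := mem_zpowers_iff.mp (hg x)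
  have hn : n ≠ 0 := by
    rintro rfl
    exact hx1 (zpow_zero g)
  -- every left coset of `K` is `g ^ r K` with `0 ≤ r < |n|`, since `g ^ n ∈ K`
  have hsurj : Function.Surjective
      fun r : Set.Ico (0 : ℤ) n.natAbs => ((g ^ (r : ℤ) : G) : G ⧸ K) := by
    intro q
    obtain ⟨c, rfl⟩ := QuotientGroup.mk_surjective q
    obtain ⟨m, rfl⟩ := mem_zpowers_iff.mp (hg c)
    refine ⟨⟨m % n, Int.emod_nonneg m hn, Int.emod_lt m hn⟩, QuotientGroup.eq.mpr ?_⟩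
    have hexp : -(m % n) + m = n * (m / n) := by rw [Int.emod_def]; ring
    rw [← zpow_neg, ← zpow_add, hexp, zpow_mul]
    exact K.zpow_mem hxK _
  have : Finite (G ⧸ K) := Finite.of_surjective _ hsurj
  exact finiteIndex_of_finite_quotient

theorem finiteIndex_of_infinite_of_isVirtuallyCyclic (hG : IsVirtuallyCyclic G)
    (K : Subgroup G) [Infinite K] : K.FiniteIndex := by
  obtain ⟨C, hC, hCfi⟩ := hG
  have hCK : C.relIndex K ≠ 0 := fun h => hCfi.index_ne_zero (index_eq_zero_of_relIndex_eq_zero h)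
  have hKC : K.subgroupOf C ≠ ⊥ := by
    intro h
    rw [subgroupOf_eq_bot, disjoint_comm, ← subgroupOf_eq_bot] at h
    rw [relIndex, h, index_bot, Nat.card_eq_zero_of_infinite] at hCK
    exact hCK rfl
  have hKC' : K.relIndex C ≠ 0 := (finiteIndex_of_ne_bot_of_isCyclic hKC).index_ne_zero
  have hC' : C.relIndex ⊤ ≠ 0 := by rw [relIndex_top_right]; exact hCfi.index_ne_zero
  exact ⟨by simpa only [relIndex_top_right] using relIndex_ne_zero_trans hKC' hC'⟩

theorem exists_forall_ge_eq_of_monotone {S : ℕ → Subgroup G} (hS : Monotone S)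
    [(S 0).FiniteIndex] : ∃ N, ∀ i ≥ N, S i = S N := by
  have hfi (i : ℕ) : (S i).FiniteIndex := finiteIndex_of_le (hS i.zero_le)
  refine ⟨Function.argmin fun i => (S i).index, fun i hi => ?_⟩
  refine ((hS hi).eq_or_lt).elim Eq.symm fun hlt => absurd (index_strictAnti hlt) ?_
  exact Function.not_lt_argmin (fun i => (S i).index) i

end Subgroup

theorem stmt1_general {G : Type*} [Group G] (S : ℕ → Subgroup G) (hmono : Monotone S)
    (hinf : ∀ i, Infinite (S i))
    (hunion : IsVirtuallyCyclic ↥(⨆ i, S i)) :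
    ∃ N, ∀ i ≥ N, S i = S N := by
  set U := ⨆ i, S i
  have hle (i : ℕ) : S i ≤ U := le_iSup S i
  have := hinf 0
  have : Infinite ((S 0).subgroupOf U) :=
    Infinite.of_injective _ (Subgroup.subgroupOfEquivOfLe (hle 0)).symm.injective
  have := Subgroup.finiteIndex_of_infinite_of_isVirtuallyCyclic hunion ((S 0).subgroupOf U)
  obtain ⟨N, hN⟩ := Subgroup.exists_forall_ge_eq_of_monotone (S := fun i => (S i).subgroupOf U)
    fun i j hij => Subgroup.subgroupOf_mono U (hmono hij)
  refine ⟨N, fun i hi => ?_⟩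
  have hiN := Subgroup.subgroupOf_inj.mp (hN i hi)
  rwa [inf_of_le_left (hle i), inf_of_le_left (hle N)] at hiN

/-- An ascending chain of infinite virtually cyclic subgroups whose union is
virtually cyclic eventually stabilizes. -/
theorem stmt1 {G : Type*} [Group G] (S : ℕ → Subgroup G) (hmono : Monotone S)
    (hinf : ∀ i, Infinite (S i)) (hvc : ∀ i, IsVirtuallyCyclic (S i))
    (hunion : IsVirtuallyCyclic ↥(⨆ i, S i)) :
    ∃ N, ∀ i ≥ N, S i = S N :=
  stmt1_general S hmono hinf hunion
end

section
/- Let W be a family of subgroups of a group G acting on a tree T, indexed by the cells of a connected graph, such that adjacent cells have subgroups each preserving a common line and each containing a hyperbolic element. Then all the subgroups preserve one common line of T; in particular the subgroup generated by all of them preserves a line of T. -/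
/-
A hyperbolic element `g` preserving a line of a tree translates it by some `k ≠ 0`: a reflection
of a line would fix a vertex or invert an edge. For a vertex `x` at distance `d` from the line,
the path from `x` to `g • x` runs to the line, along it and back, so `d(x, g • x) = 2 d + |k|`.
If `x` also lies on a second `g`-invariant line, translated by `k'`, comparing this with `g²`
gives `2 d + |k| = |k'|` and `2 d + 2 |k| = 2 |k'|`, so `d = 0`. Hence a hyperbolic element
preserves only one line, adjacent indices carry the same line, and connectivity of the index
graph makes it common to all the subgroups, whose join then lies in its stabilizer.
-/

/-- A (bi-infinite geodesic) line in a graph: an injective `ℤ`-indexed sequence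
of consecutively adjacent vertices. -/
def IsLine {V : Type*} (T : SimpleGraph V) (L : ℤ → V) : Prop :=
  Function.Injective L ∧ ∀ n : ℤ, T.Adj (L n) (L (n + 1))

/-- `g` preserves the line `L` setwise. -/
def PreservesLine {V G : Type*} [Group G] [MulAction G V] (g : G) (L : ℤ → V) : Prop :=
  (g • ·) '' Set.range L = Set.range L

lemma Int.eq_add_or_eq_sub_of_injective {φ : ℤ → ℤ} (hinj : φ.Injective)
    (hstep : ∀ n, (φ (n + 1) - φ n).natAbs = 1) :
    (∀ n, φ n = φ 0 + n) ∨ ∀ n, φ n = φ 0 - n := by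
  have hsame : ∀ n, φ (n + 1 + 1) - φ (n + 1) = φ (n + 1) - φ n := by
    intro n
    have h₁ := hstep n
    have h₂ := hstep (n + 1)
    have : φ (n + 1 + 1) ≠ φ n := fun h => by have := hinj h; omega
    omega
  have hconst : ∀ n, φ (n + 1) - φ n = φ 1 - φ 0 := by
    intro n
    induction n with
    | zero => simp
    | succ n ih => rw [hsame, ih]
    | pred n ih =>
      have := hsame (-n - 1)
      rw [sub_add_cancel] at this ⊢
      omega
  have hlin : ∀ n, φ n = φ 0 + n * (φ 1 - φ 0) := by
    intro n
    induction n with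
    | zero => simp
    | succ n ih => have := hconst n; linarith
    | pred n ih =>
      have := hconst (-n - 1)
      rw [sub_add_cancel] at this
      linarith
  have h₀ := hstep 0
  rw [zero_add] at h₀
  rcases Int.natAbs_eq_iff.mp h₀ with h | h
  · exact Or.inl fun n => by rw [hlin n, h]; simp
  · exact Or.inr fun n => by rw [hlin n, h]; ring

open SimpleGraph Walk

namespace SimpleGraph

variable {V : Type*} {T : SimpleGraph V}

lemma IsAcyclic.eq_of_isPath (hT : T.IsAcyclic) {u v : V} {p q : T.Walk u v}
    (hp : p.IsPath) (hq : q.IsPath) : p = q :=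
  congrArg Subtype.val ((hT.subsingleton_path u v).elim ⟨p, hp⟩ ⟨q, hq⟩)

lemma Walk.IsPath.append {u v w : V} {p : T.Walk u v} {q : T.Walk v w}
    (hp : p.IsPath) (hq : q.IsPath) (hpq : ∀ x ∈ p.support, x ∈ q.support → x = v) :
    (p.append q).IsPath := by
  have hq' := hq.support_nodup
  rw [← cons_tail_support q, List.nodup_cons] at hq'
  rw [isPath_def, support_append]
  exact hp.support_nodup.append hq'.2 fun x hxp hxq =>
    hq'.1 (hpq x hxp (List.mem_of_mem_tail hxq) ▸ hxq)

/-- A common vertex of `A` and `C` would be joined to `v` by two different paths, one through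
`u` and one avoiding it. -/
lemma IsAcyclic.isPath_append_append (hT : T.IsAcyclic) {S : Set V} {x u v y : V}
    {A : T.Walk x u} {B : T.Walk u v} {C : T.Walk v y}
    (hA : A.IsPath) (hB : B.IsPath) (hC : C.IsPath) (huv : u ≠ v)
    (hAS : ∀ z ∈ A.support, z ∈ S → z = u) (hBS : ∀ z ∈ B.support, z ∈ S)
    (hCS : ∀ z ∈ C.support, z ∈ S → z = v) :
    (A.append (B.append C)).IsPath := by
  classical
  refine hA.append (hB.append hC fun z hzB hzC => hCS z hzC (hBS z hzB)) fun z hzA hzBC => ?_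
  rcases (mem_support_append_iff _ _).mp hzBC with hzB | hzC
  · exact hAS z hzA (hBS z hzB)
  · have hX : ((A.dropUntil z hzA).append B).IsPath :=
      (hA.dropUntil hzA).append hB fun w hwA hwB =>
        hAS w (A.support_dropUntil_subset_support hzA hwA) (hBS w hwB)
    have hXY := hT.eq_of_isPath hX (hC.takeUntil hzC).reverse
    have hu : u ∈ ((A.dropUntil z hzA).append B).support :=
      support_subset_support_append_right _ _ B.start_mem_support
    rw [hXY, support_reverse, List.mem_reverse] at hu
    exact (huv (hCS u (C.support_takeUntil_subset_support hzC hu) (hBS u B.start_mem_support))).elim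

lemma Walk.exists_isPath_entry {S : Set V} {x y : V} (W : T.Walk x y) (hy : y ∈ S) :
    ∃ u ∈ S, ∃ A : T.Walk x u, A.IsPath ∧ ∀ z ∈ A.support, z ∈ S → z = u := by
  suffices h : ∃ u ∈ S, ∃ A : T.Walk x u, ∀ z ∈ A.support, z ∈ S → z = u by
    classical
    obtain ⟨u, hu, A, hA⟩ := h
    exact ⟨u, hu, A.bypass, A.bypass_isPath,
      fun z hz => hA z (A.support_bypass_subset_support hz)⟩
  induction W with
  | nil => exact ⟨_, hy, nil, by simp⟩
  | @cons x w y h W ih =>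
    by_cases hx : x ∈ S
    · exact ⟨x, hx, nil, by simp⟩
    · obtain ⟨u, hu, A, hA⟩ := ih hy
      refine ⟨u, hu, cons h A, fun z hz hzS => ?_⟩
      rcases List.mem_cons.mp (support_cons h A ▸ hz) with rfl | hz
      · exact absurd hzS hx
      · exact hA z hz hzS

end SimpleGraph

namespace IsLine

variable {V : Type*} {T : SimpleGraph V} {L : ℤ → V}

lemma exists_isPath_of_le (hL : IsLine T L) {i j : ℤ} (hij : i ≤ j) :
    ∃ p : T.Walk (L i) (L j), p.IsPath ∧ p.length = (j - i).natAbs ∧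
      ∀ v ∈ p.support, v ∈ L '' Set.Icc i j := by
  induction j, hij using Int.leInduction with
  | base => exact ⟨.nil, by simp, by simp, by simp⟩
  | succ j hij ih =>
    obtain ⟨p, hp, hlen, hsupp⟩ := ih
    refine ⟨p.concat (hL.2 j), hp.concat (fun hmem => ?_) _, ?_, fun v hv => ?_⟩
    · obtain ⟨t, ht, hteq⟩ := hsupp _ hmem
      have := hL.1 hteq
      simp only [Set.mem_Icc] at ht
      omega
    · rw [Walk.length_concat, hlen]
      omega
    · simp only [Walk.support_concat, List.mem_append, List.mem_singleton] at hv
      rcases hv with hv | rfl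
      · exact Set.image_mono (Set.Icc_subset_Icc_right (by omega)) (hsupp v hv)
      · exact ⟨j + 1, by simp only [Set.mem_Icc]; omega, rfl⟩

lemma exists_isPath (hL : IsLine T L) (i j : ℤ) :
    ∃ p : T.Walk (L i) (L j), p.IsPath ∧ p.length = (j - i).natAbs ∧
      ∀ v ∈ p.support, v ∈ Set.range L := by
  rcases le_total i j with hij | hji
  · obtain ⟨p, hp, hlen, hsupp⟩ := hL.exists_isPath_of_le hij
    exact ⟨p, hp, hlen, fun v hv => Set.image_subset_range _ _ (hsupp v hv)⟩
  · obtain ⟨p, hp, hlen, hsupp⟩ := hL.exists_isPath_of_le hji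
    refine ⟨p.reverse, hp.reverse, by rw [Walk.length_reverse, hlen]; omega, fun v hv => ?_⟩
    rw [Walk.support_reverse, List.mem_reverse] at hv
    exact Set.image_subset_range _ _ (hsupp v hv)

lemma natAbs_sub_eq_one_of_adj (hT : T.IsAcyclic) (hL : IsLine T L) {i j : ℤ}
    (h : T.Adj (L i) (L j)) : (j - i).natAbs = 1 := by
  obtain ⟨p, hp, hlen, -⟩ := hL.exists_isPath i j
  have hedge : (Walk.cons h .nil).IsPath := by simp [h.ne]
  rw [← hlen, ← hT.eq_of_isPath hedge hp, Walk.length_cons, Walk.length_nil]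

variable {G : Type*} [Group G] [MulAction G V]

/-- A reflection `n ↦ c - n` of the line fixes `L (c / 2)` when `c` is even and inverts the
edge at `(c - 1) / 2` when `c` is odd. -/
lemma exists_translation (hT : T.IsAcyclic) (hL : IsLine T L) {g : G}
    (hadj : ∀ u v, T.Adj u v → T.Adj (g • u) (g • v)) (hfix : ∀ v : V, g • v ≠ v)
    (hninv : ∀ u v, T.Adj u v → ¬(g • u = v ∧ g • v = u)) (hg : PreservesLine g L) :
    ∃ k ≠ 0, ∀ n, g • L n = L (n + k) := by
  have hmem (n : ℤ) : g • L n ∈ Set.range L :=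
    (hg : _ = _) ▸ Set.mem_image_of_mem (g • ·) (Set.mem_range_self n)
  choose φ hφ using hmem
  have hinj : φ.Injective := fun a b hab =>
    hL.1 <| MulAction.injective g <| show g • L a = g • L b by rw [← hφ, ← hφ, hab]
  have hstep : ∀ n, (φ (n + 1) - φ n).natAbs = 1 := fun n =>
    hL.natAbs_sub_eq_one_of_adj hT (by rw [hφ, hφ]; exact hadj _ _ (hL.2 n))
  rcases Int.eq_add_or_eq_sub_of_injective hinj hstep with h | h
  · refine ⟨φ 0, fun h0 => hfix (L 0) ?_, fun n => by rw [← hφ, h, add_comm]⟩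
    rw [← hφ, h0]
  · exfalso
    obtain ⟨t, ht⟩ | ⟨t, ht⟩ := Int.even_or_odd (φ 0)
    · exact hfix (L t) (by rw [← hφ, h, ht]; congr 1; ring)
    · refine hninv (L t) (L (t + 1)) (hL.2 t) ⟨?_, ?_⟩
      · rw [← hφ, h, ht]; congr 1; ring
      · rw [← hφ, h, ht]; congr 1; ring

lemma exists_isPath_to_smul (hT : T.IsAcyclic) (hL : IsLine T L) {g : G}
    (hadj : ∀ u v, T.Adj u v → T.Adj (g • u) (g • v)) {k : ℤ} (hk : k ≠ 0)
    (htr : ∀ n, g • L n = L (n + k)) {x : V} {a : ℤ} {A : T.Walk x (L a)} (hA : A.IsPath)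
    (hAL : ∀ z ∈ A.support, z ∈ Set.range L → z = L a) :
    ∃ P : T.Walk x (g • x), P.IsPath ∧ P.length = 2 * A.length + k.natAbs := by
  obtain ⟨B, hB, hBlen, hBL⟩ := hL.exists_isPath a (a + k)
  let f : T →g T := ⟨(g • ·), hadj _ _⟩
  let C : T.Walk (L (a + k)) (g • x) := ((A.map f).copy rfl (htr a)).reverse
  have hC : C.IsPath :=
    ((Walk.isPath_copy _ _ _).2 (hA.map (MulAction.injective g))).reverse
  have hCL : ∀ z ∈ C.support, z ∈ Set.range L → z = L (a + k) := by
    rintro z hz ⟨m, rfl⟩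
    simp only [C, Walk.support_reverse, List.mem_reverse, Walk.support_copy, Walk.support_map,
      List.mem_map] at hz
    obtain ⟨w, hw, hwm⟩ := hz
    have hw' : w = L (m - k) := MulAction.injective g <|
      show g • w = g • L (m - k) by rw [htr, sub_add_cancel]; exact hwm
    rw [← hwm, hAL w hw ⟨_, hw'.symm⟩]
    exact htr a
  refine ⟨A.append (B.append C),
    hT.isPath_append_append hA hB hC (hL.1.ne (by omega)) hAL hBL hCL, ?_⟩
  simp only [C, Walk.length_append, Walk.length_reverse, Walk.length_copy, Walk.length_map,
    hBlen]
  omega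

lemma two_mul_length_add_natAbs_eq (hT : T.IsAcyclic) (hL : IsLine T L) {L' : ℤ → V}
    (hL' : IsLine T L') {g : G} (hadj : ∀ u v, T.Adj u v → T.Adj (g • u) (g • v)) {k k' : ℤ}
    (hk : k ≠ 0) (htr : ∀ n, g • L n = L (n + k)) (htr' : ∀ n, g • L' n = L' (n + k'))
    {j a : ℤ} {A : T.Walk (L' j) (L a)} (hA : A.IsPath)
    (hAL : ∀ z ∈ A.support, z ∈ Set.range L → z = L a) :
    2 * A.length + k.natAbs = k'.natAbs := by
  obtain ⟨P, hP, hPlen⟩ := hL.exists_isPath_to_smul hT hadj hk htr hA hAL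
  obtain ⟨Q, hQ, hQlen, -⟩ := hL'.exists_isPath j (j + k')
  rw [← hPlen, hT.eq_of_isPath hP ((Walk.isPath_copy _ rfl (htr' j).symm).2 hQ),
    Walk.length_copy, hQlen, add_sub_cancel_left]

lemma range_subset_of_translation (hT : T.IsTree) (hL : IsLine T L) {L' : ℤ → V}
    (hL' : IsLine T L') {g : G} (hadj : ∀ u v, T.Adj u v → T.Adj (g • u) (g • v)) {k k' : ℤ}
    (hk : k ≠ 0) (htr : ∀ n, g • L n = L (n + k)) (htr' : ∀ n, g • L' n = L' (n + k')) :
    Set.range L' ⊆ Set.range L := by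
  rintro _ ⟨j, rfl⟩
  obtain ⟨W⟩ := hT.1.preconnected (L' j) (L 0)
  obtain ⟨_, ⟨a, rfl⟩, A, hA, hAL⟩ := W.exists_isPath_entry (Set.mem_range_self 0)
  have hadj2 : ∀ u v, T.Adj u v → T.Adj ((g * g) • u) ((g * g) • v) := fun u v h => by
    simpa only [mul_smul] using hadj _ _ (hadj u v h)
  have h₁ := two_mul_length_add_natAbs_eq hT.2 hL hL' hadj hk htr htr' hA hAL
  have h₂ := two_mul_length_add_natAbs_eq hT.2 hL hL' hadj2 (k := k + k) (k' := k' + k')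
    (by omega) (fun n => by rw [mul_smul, htr, htr, add_assoc])
    (fun n => by rw [mul_smul, htr', htr', add_assoc]) hA hAL
  have hnil : A.length = 0 := by omega
  exact ⟨a, (Walk.eq_of_length_eq_zero hnil).symm⟩

lemma range_eq_of_preservesLine (hT : T.IsTree) (hL : IsLine T L) {L' : ℤ → V}
    (hL' : IsLine T L') {g : G} (hadj : ∀ u v, T.Adj u v → T.Adj (g • u) (g • v))
    (hfix : ∀ v : V, g • v ≠ v) (hninv : ∀ u v, T.Adj u v → ¬(g • u = v ∧ g • v = u))
    (hg : PreservesLine g L) (hg' : PreservesLine g L') :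
    Set.range L = Set.range L' := by
  obtain ⟨k, hk, htr⟩ := hL.exists_translation hT.2 hadj hfix hninv hg
  obtain ⟨k', hk', htr'⟩ := hL'.exists_translation hT.2 hadj hfix hninv hg'
  exact (range_subset_of_translation hT hL' hL hadj hk' htr' htr).antisymm
    (range_subset_of_translation hT hL hL' hadj hk htr htr')

end IsLine

open scoped Pointwise in
def lineStabilizer {V : Type*} (G : Type*) [Group G] [MulAction G V] (L : ℤ → V) :
    Subgroup G :=
  MulAction.stabilizer G (Set.range L)

lemma mem_lineStabilizer {V G : Type*} [Group G] [MulAction G V] {g : G} {L : ℤ → V} :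
    g ∈ lineStabilizer G L ↔ PreservesLine g L :=
  Iff.rfl

/-- A family of subgroups indexed by a connected graph, each preserving a line
and containing a hyperbolic element, with adjacent ones preserving a common
line, all preserve one common line; in particular the subgroup they generate
preserves a line. -/
theorem stmt6 {V : Type*} (T : SimpleGraph V) (hT : T.IsTree)
    {G : Type*} [Group G] [MulAction G V]
    (hadj : ∀ (g : G) (u v : V), T.Adj u v → T.Adj (g • u) (g • v))
    (hninv : ∀ (g : G) (u v : V), T.Adj u v → ¬(g • u = v ∧ g • v = u))
    {ι : Type*} (Γ : SimpleGraph ι) (hΓ : Γ.Connected)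
    (Wf : ι → Subgroup G)
    (hhyp : ∀ i, ∃ g ∈ Wf i, ∀ v : V, g • v ≠ v)
    (hlines : ∀ i, ∃ L : ℤ → V, IsLine T L ∧ ∀ g ∈ Wf i, PreservesLine g L)
    (hadjpair : ∀ i j, Γ.Adj i j → ∃ L : ℤ → V, IsLine T L ∧
      (∀ g ∈ Wf i, PreservesLine g L) ∧ (∀ g ∈ Wf j, PreservesLine g L)) :
    ∃ L : ℤ → V, IsLine T L ∧ (∀ i, ∀ g ∈ Wf i, PreservesLine g L) ∧
      ∀ g ∈ ⨆ i, Wf i, PreservesLine g L := by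
  choose ℓ hℓ using hlines
  have hrange_adj : ∀ i j, Γ.Adj i j → Set.range (ℓ i) = Set.range (ℓ j) := by
    intro i j hij
    obtain ⟨M, hM, hMi, hMj⟩ := hadjpair i j hij
    obtain ⟨gi, hgi, hgi_fix⟩ := hhyp i
    obtain ⟨gj, hgj, hgj_fix⟩ := hhyp j
    rw [(hℓ i).1.range_eq_of_preservesLine hT hM (hadj gi) hgi_fix (hninv gi)
        ((hℓ i).2 gi hgi) (hMi gi hgi),
      (hℓ j).1.range_eq_of_preservesLine hT hM (hadj gj) hgj_fix (hninv gj)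
        ((hℓ j).2 gj hgj) (hMj gj hgj)]
  obtain ⟨i₀⟩ := hΓ.nonempty
  have hrange : ∀ i, Set.range (ℓ i) = Set.range (ℓ i₀) := fun i => by
    obtain ⟨W⟩ := hΓ.preconnected i i₀
    induction W with
    | nil => rfl
    | cons hij _ ih => exact (hrange_adj _ _ hij).trans ih
  have hle : ∀ i, Wf i ≤ lineStabilizer G (ℓ i₀) := fun i g hg => by
    rw [mem_lineStabilizer, PreservesLine, ← hrange i]
    exact (hℓ i).2 g hg
  exact ⟨ℓ i₀, (hℓ i₀).1, fun i g hg => hle i hg, fun g hg => iSup_le hle hg⟩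
end

section
/- Let G be a group in which every subgroup either contains a free group of rank 2 or is virtually cyclic. Then every ascending chain of slender subgroups of G stabilizes. -/
open SemidirectProduct Finsupp Subgroup

/-- The base group of the lamplighter group. -/
abbrev LampBase : Type := ℤ →₀ ZMod 2

/-- The shift automorphism. -/
noncomputable def lampShift : MulAut (Multiplicative LampBase) :=
  AddEquiv.toMultiplicative (Finsupp.domCongr (Equiv.addLeft (1 : ℤ)))

noncomputable def lampAction : Multiplicative ℤ →* MulAut (Multiplicative LampBase) :=
  zpowersHom _ lampShift

abbrev Lamplighter : Type := Multiplicative LampBase ⋊[lampAction] Multiplicative ℤ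

noncomputable def lampA : Lamplighter := inl (Multiplicative.ofAdd (Finsupp.single 0 1))
noncomputable def lampT : Lamplighter := inr (Multiplicative.ofAdd 1)

lemma lampShift_apply (x : LampBase) :
    lampShift (Multiplicative.ofAdd x) =
      Multiplicative.ofAdd (Finsupp.equivMapDomain (Equiv.addLeft (1 : ℤ)) x) := rfl

lemma lampShift_symm_apply (x : LampBase) :
    lampShift⁻¹ (Multiplicative.ofAdd x) =
      Multiplicative.ofAdd (Finsupp.equivMapDomain (Equiv.addLeft (1 : ℤ)).symm x) := rfl

lemma lampShift_single (i : ℤ) (c : ZMod 2) :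
    lampShift (Multiplicative.ofAdd (Finsupp.single i c)) =
      Multiplicative.ofAdd (Finsupp.single (1 + i) c) := by
  rw [lampShift_apply, Finsupp.equivMapDomain_single]
  rfl

lemma lampShift_symm_single (i : ℤ) (c : ZMod 2) :
    lampShift⁻¹ (Multiplicative.ofAdd (Finsupp.single i c)) =
      Multiplicative.ofAdd (Finsupp.single (-1 + i) c) := by
  rw [lampShift_symm_apply, Finsupp.equivMapDomain_single]
  rfl

lemma lampT_conj (i : ℤ) (c : ZMod 2) :
    lampT * inl (Multiplicative.ofAdd (Finsupp.single i c)) * lampT⁻¹ =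
      inl (Multiplicative.ofAdd (Finsupp.single (i + 1) c)) := by
  have h := inl_aut (φ := lampAction) (Multiplicative.ofAdd (1 : ℤ))
    (Multiplicative.ofAdd (Finsupp.single i c))
  rw [map_inv] at h
  rw [lampT, ← h]
  congr 1
  have h2 : lampAction (Multiplicative.ofAdd (1 : ℤ)) = lampShift := by
    show lampShift ^ (Multiplicative.toAdd (Multiplicative.ofAdd (1 : ℤ))) = lampShift
    simp
  rw [h2, lampShift_single, add_comm]

lemma lampT_conj_inv (i : ℤ) (c : ZMod 2) :
    lampT⁻¹ * inl (Multiplicative.ofAdd (Finsupp.single i c)) * lampT =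
      inl (Multiplicative.ofAdd (Finsupp.single (i - 1) c)) := by
  have h := inl_aut_inv (φ := lampAction) (Multiplicative.ofAdd (1 : ℤ))
    (Multiplicative.ofAdd (Finsupp.single i c))
  rw [map_inv] at h
  rw [lampT, ← h]
  congr 1
  have h2 : (lampAction (Multiplicative.ofAdd (1 : ℤ)))⁻¹ = lampShift⁻¹ := by
    have : lampAction (Multiplicative.ofAdd (1 : ℤ)) = lampShift := by
      show lampShift ^ (Multiplicative.toAdd (Multiplicative.ofAdd (1 : ℤ))) = lampShift
      simp
    rw [this]
  rw [h2, lampShift_symm_single, show (-1 + i) = i - 1 by ring]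

lemma lamp_single_mem (i : ℤ) :
    inl (Multiplicative.ofAdd (Finsupp.single i (1 : ZMod 2))) ∈
      Subgroup.closure {lampA, lampT} := by
  have hA : lampA ∈ Subgroup.closure {lampA, lampT} :=
    Subgroup.subset_closure (by simp)
  have hT : lampT ∈ Subgroup.closure {lampA, lampT} :=
    Subgroup.subset_closure (by simp)
  induction i using Int.induction_on with
  | zero => exact hA
  | succ k ih =>
      rw [← lampT_conj]
      exact mul_mem (mul_mem hT ih) (inv_mem hT)
  | pred k ih =>
      rw [← lampT_conj_inv (-(k : ℤ)) 1]
      exact mul_mem (mul_mem (inv_mem hT) ih) hT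

lemma lamp_closure_eq_top : Subgroup.closure {lampA, lampT} = (⊤ : Subgroup Lamplighter) := by
  rw [eq_top_iff]
  intro x _
  have hT : lampT ∈ Subgroup.closure {lampA, lampT} :=
    Subgroup.subset_closure (by simp)
  rw [← inl_left_mul_inr_right x]
  refine mul_mem ?_ ?_
  · -- inl part
    set f := x.left.toAdd with hf
    have : ∀ g : LampBase, inl (Multiplicative.ofAdd g) ∈ Subgroup.closure {lampA, lampT} := by
      intro g
      induction g using Finsupp.induction with
      | zero => simpa using one_mem _
      | single_add a b g ha hb ih =>
          have hb1 : b = 1 := by revert hb; revert b; decide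
          have : Multiplicative.ofAdd (Finsupp.single a b + g) =
              Multiplicative.ofAdd (Finsupp.single a b) * Multiplicative.ofAdd g := rfl
          rw [this, map_mul]
          exact mul_mem (hb1 ▸ lamp_single_mem a) ih
    exact this f
  · -- inr part
    have : inr x.right = lampT ^ (x.right.toAdd) := by
      rw [lampT, ← map_zpow]
      congr 1
      rw [← ofAdd_zsmul, smul_eq_mul, mul_one]
      simp
    rw [this]
    exact zpow_mem hT _

/-- The projection from the free group on two generators onto the lamplighter group. -/
noncomputable def lampProj : FreeGroup (Fin 2) →* Lamplighter :=
  FreeGroup.lift (fun i => if i = 0 then lampA else lampT)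

lemma lampProj_surjective : Function.Surjective lampProj := by
  rw [← MonoidHom.range_eq_top, eq_top_iff, ← lamp_closure_eq_top, Subgroup.closure_le]
  rintro x (rfl | rfl)
  · exact ⟨FreeGroup.of 0, by simp [lampProj]⟩
  · exact ⟨FreeGroup.of 1, by simp [lampProj]⟩

/-- The base subgroup of the lamplighter group is not finitely generated. -/
lemma lampBase_not_fg :
    ¬ (SemidirectProduct.inl :
        Multiplicative LampBase →* Lamplighter).range.FG := by
  intro h
  haveI : Group.FG (SemidirectProduct.inl :
      Multiplicative LampBase →* Lamplighter).range :=
    (Group.fg_iff_subgroup_fg _).mpr h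
  haveI : Group.FG (Multiplicative LampBase) := by
    have e := MonoidHom.ofInjective (f := (SemidirectProduct.inl :
      Multiplicative LampBase →* Lamplighter)) inl_injective
    exact Group.fg_of_surjective (f := e.symm.toMonoidHom) e.symm.surjective
  haveI : AddGroup.FG LampBase := AddGroup.fg_iff_mul_fg.mpr ‹_›
  have htor : AddMonoid.IsTorsion LampBase := by
    intro x
    rw [isOfFinAddOrder_iff_nsmul_eq_zero]
    refine ⟨2, by norm_num, ?_⟩
    rw [two_nsmul]
    ext i
    exact CharTwo.add_self_eq_zero (x i)
  have : Finite LampBase := AddCommGroup.finite_of_fg_torsion _ htor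
  exact @not_finite LampBase _ this

/-- A group with a finitely generated subgroup of finite index is finitely generated. -/
lemma group_fg_of_fg_of_finiteIndex {Γ : Type*} [Group Γ] (H : Subgroup Γ)
    [H.FiniteIndex] (h : H.FG) : Group.FG Γ := by
  obtain ⟨s, hs⟩ := h
  rw [Group.fg_iff]
  refine ⟨↑s ∪ Set.range (fun q : Γ ⧸ H => q.out), ?_, ?_⟩
  · rw [eq_top_iff]
    intro x _
    obtain ⟨h, hh⟩ := QuotientGroup.mk_out_eq_mul H x
    have hx : x = (QuotientGroup.mk x : Γ ⧸ H).out * (h : Γ)⁻¹ := by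
      rw [hh]; group
    rw [hx]
    refine mul_mem ?_ (inv_mem ?_)
    · exact Subgroup.subset_closure (Set.mem_union_right _ ⟨_, rfl⟩)
    · have : (h : Γ) ∈ Subgroup.closure (↑s : Set Γ) := by
        rw [hs]; exact h.2
      exact Subgroup.closure_mono Set.subset_union_left this
  · exact s.finite_toSet.union (Set.finite_range _)

/-- A finitely generated subgroup below the supremum of a monotone chain lies in
some member of the chain. -/
lemma fg_le_of_le_iSup {G : Type*} [Group G] (S : ℕ → Subgroup G) (hmono : Monotone S)
    {K : Subgroup G} (hK : K.FG) (hle : K ≤ ⨆ i, S i) : ∃ i, K ≤ S i := by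
  obtain ⟨s, hs⟩ := hK
  have hx : ∀ g : {x // x ∈ s}, ∃ i, (g : G) ∈ S i := by
    intro g
    have : (g : G) ∈ ⨆ i, S i := hle (hs ▸ Subgroup.subset_closure g.2)
    exact (Subgroup.mem_iSup_of_directed (hmono.directed_le)).mp this
  choose f hf using hx
  refine ⟨s.attach.sup f, ?_⟩
  rw [← hs, Subgroup.closure_le]
  intro g hg
  exact hmono (Finset.le_sup (Finset.mem_attach s ⟨g, hg⟩)) (hf ⟨g, hg⟩)

/-- A cyclic group is finitely generated. -/
lemma fg_of_cyclic {Γ : Type*} [Group Γ] [IsCyclic Γ] : Group.FG Γ := by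
  obtain ⟨g, hg⟩ := IsCyclic.exists_generator (α := Γ)
  rw [Group.fg_iff]
  refine ⟨{g}, ?_, Set.finite_singleton g⟩
  rw [eq_top_iff]
  intro x _
  rcases hg x with ⟨n, rfl⟩
  exact Subgroup.zpow_mem _ (Subgroup.subset_closure (Set.mem_singleton g)) n

/-- If every subgroup of `G` either contains a free group of rank 2 or is
virtually cyclic (Tits alternative), then every ascending chain of slender
subgroups of `G` stabilizes. -/
theorem stmt14 {G : Type*} [Group G]
    (htits : ∀ H : Subgroup G,
      (∃ φ : FreeGroup (Fin 2) →* G, Function.Injective φ ∧ φ.range ≤ H) ∨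
      IsVirtuallyCyclic H)
    (S : ℕ → Subgroup G) (hmono : Monotone S)
    (hslender : ∀ i, ∀ K : Subgroup G, K ≤ S i → K.FG) :
    ∃ N, ∀ i ≥ N, S i = S N := by
  have hTfg : (⨆ i, S i).FG := by
    rcases htits (⨆ i, S i) with ⟨φ, hinj, hle⟩ | ⟨Hc, hcyc, hfin⟩
    · -- free subgroup case: contradiction with slenderness
      exfalso
      -- φ.range is finitely generated, so lies in some S i
      haveI : Group.FG (FreeGroup (Fin 2)) := by
        rw [Group.fg_iff]
        exact ⟨Set.range FreeGroup.of, FreeGroup.closure_range_of _,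
          (Set.finite_range _)⟩
      have hrfg : φ.range.FG := by
        rw [← Group.fg_iff_subgroup_fg]
        exact Group.fg_range φ
      obtain ⟨i, hi⟩ := fg_le_of_le_iSup S hmono hrfg hle
      -- the image of the preimage of the lamplighter base is a non-fg subgroup of S i
      set P : Subgroup (FreeGroup (Fin 2)) :=
        Subgroup.comap lampProj (SemidirectProduct.inl
          (φ := lampAction)).range with hP
      have hK : (Subgroup.map φ P).FG := by
        refine hslender i _ (le_trans ?_ hi)
        exact (Subgroup.map_le_range φ P)
      haveI : Group.FG (Subgroup.map φ P) := (Group.fg_iff_subgroup_fg _).mpr hK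
      haveI : Group.FG P := by
        have e := Subgroup.equivMapOfInjective P φ hinj
        exact Group.fg_of_surjective (f := e.symm.toMonoidHom) e.symm.surjective
      haveI : Group.FG (Subgroup.map lampProj P) :=
        Group.fg_of_surjective (lampProj.subgroupMap_surjective P)
      have hmapeq : Subgroup.map lampProj P = (SemidirectProduct.inl
          (φ := lampAction)).range := by
        rw [hP]
        exact Subgroup.map_comap_eq_self_of_surjective lampProj_surjective _
      apply lampBase_not_fg
      rw [← hmapeq, ← Group.fg_iff_subgroup_fg]
      infer_instance
    · -- virtually cyclic case: the supremum is finitely generated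
      rw [← Group.fg_iff_subgroup_fg]
      haveI := hfin
      refine group_fg_of_fg_of_finiteIndex Hc ?_
      rw [← Group.fg_iff_subgroup_fg]
      exact @fg_of_cyclic _ _ hcyc
  obtain ⟨N, hN⟩ := fg_le_of_le_iSup S hmono hTfg le_rfl
  refine ⟨N, fun i hi => le_antisymm ?_ (hmono hi)⟩
  exact le_trans (le_trans (le_iSup S i) hN) le_rfl
end
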